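/- arXiv:2006.08951 — 2 statements merged into one kernel-verified Lean document; each statement's English description precedes it below -/
import Mathlib

section
/- Let F : ℝⁿ → ℝ be differentiable such that F + (l/2)‖·‖² is convex for some l ∈ ℝ, and γ > 0. If γ∇F(y^{t+1}) = x^t − y^{t+1} and γ∇F(y^t) = x^{t−1} − y^t, then ⟨y^{t+1} − y^t, x^t − x^{t−1}⟩ ≥ (1 − γl)‖y^{t+1} − y^t‖². -/
/-!
The gradient of a convex function is monotone: restricted to the segment from `x` to `y` it
becomes a convex function of one variable, whose derivative at `0` is at most the slope between
`0` and `1`, which in turn is at most the derivative at `1`. Applied to `F + (l/2)‖·‖²`, whose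
gradient is `∇F + l • id`, this gives `⟪∇F y₂ - ∇F y₁, y₂ - y₁⟫ ≥ -l ‖y₂ - y₁‖²`; the optimality
conditions write `x₁ - x₀` as `γ (∇F y₂ - ∇F y₁) + (y₂ - y₁)`.
-/

open Set RealInnerProductSpace

variable {E : Type*} [NormedAddCommGroup E] [InnerProductSpace ℝ E] [CompleteSpace E]

theorem HasGradientAt.hasDerivAt_comp_lineMap {G : E → ℝ} {g x y : E} {t : ℝ}
    (h : HasGradientAt G g (AffineMap.lineMap x y t)) :
    HasDerivAt (fun s => G (AffineMap.lineMap x y s)) ⟪g, y - x⟫ t :=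
  h.hasFDerivAt.comp_hasDerivAt t AffineMap.hasDerivAt_lineMap

theorem ConvexOn.inner_gradient_sub_nonneg {G : E → ℝ} {G' : E → E} (hG : ConvexOn ℝ univ G)
    {x y : E} (hx : HasGradientAt G (G' x) x) (hy : HasGradientAt G (G' y) y) :
    0 ≤ ⟪G' y - G' x, y - x⟫ := by
  have hφ : ConvexOn ℝ univ (fun t : ℝ => G (AffineMap.lineMap x y t)) :=
    hG.comp_affineMap (AffineMap.lineMap x y)
  have h0 := HasGradientAt.hasDerivAt_comp_lineMap (x := x) (y := y) (t := 0) (by simpa using hx)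
  have h1 := HasGradientAt.hasDerivAt_comp_lineMap (x := x) (y := y) (t := 1) (by simpa using hy)
  have hslope := (hφ.le_slope_of_hasDerivAt (mem_univ 0) (mem_univ 1) one_pos h0).trans
    (hφ.slope_le_of_hasDerivAt (mem_univ 0) (mem_univ 1) one_pos h1)
  rw [inner_sub_left]
  linarith

theorem HasGradientAt.add_mul_norm_sq {F : E → ℝ} {g x : E} (h : HasGradientAt F g x) (c : ℝ) :
    HasGradientAt (fun z => F z + c * ‖z‖ ^ 2) (g + (2 * c) • x) x := by
  rw [hasGradientAt_iff_hasFDerivAt] at *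
  refine (h.add ((hasStrictFDerivAt_norm_sq x).hasFDerivAt.const_mul c)).congr_fderiv ?_
  ext v
  simp only [add_apply, smul_apply, InnerProductSpace.toDual_apply_apply, innerSL_apply_apply,
    nsmul_eq_mul, smul_eq_mul, inner_add_left, real_inner_smul_left]
  ring

theorem inner_gradient_sub_ge_of_convexOn_add_norm_sq {F : E → ℝ} {F' : E → E} {l : ℝ}
    (hconv : ConvexOn ℝ univ (fun z => F z + (l / 2) * ‖z‖ ^ 2)) {x y : E}
    (hx : HasGradientAt F (F' x) x) (hy : HasGradientAt F (F' y) y) :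
    -(l * ‖y - x‖ ^ 2) ≤ ⟪F' y - F' x, y - x⟫ := by
  have hmono := hconv.inner_gradient_sub_nonneg (G' := fun z => F' z + (2 * (l / 2)) • z)
    (hx.add_mul_norm_sq _) (hy.add_mul_norm_sq _)
  have hsplit : (F' y + (2 * (l / 2)) • y) - (F' x + (2 * (l / 2)) • x)
      = (F' y - F' x) + l • (y - x) := by
    rw [mul_div_cancel₀ _ two_ne_zero, smul_sub]; abel
  rw [hsplit, inner_add_left, real_inner_smul_left, real_inner_self_eq_norm_sq] at hmono
  linarith

theorem stmt_4 {n : ℕ} (F : EuclideanSpace ℝ (Fin n) → ℝ)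
    (F' : EuclideanSpace ℝ (Fin n) → EuclideanSpace ℝ (Fin n)) (l γ : ℝ) (hγ : 0 < γ)
    (hdiff : ∀ x, HasGradientAt F (F' x) x)
    (hconv : ConvexOn ℝ Set.univ (fun x => F x + (l / 2) * ‖x‖ ^ 2))
    (x0 x1 y1 y2 : EuclideanSpace ℝ (Fin n))
    (hopt2 : γ • F' y2 = x1 - y2)
    (hopt1 : γ • F' y1 = x0 - y1) :
    (inner ℝ (y2 - y1) (x1 - x0) : ℝ) ≥ (1 - γ * l) * ‖y2 - y1‖ ^ 2 := by
  have hx : x1 - x0 = γ • (F' y2 - F' y1) + (y2 - y1) := by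
    rw [smul_sub, hopt1, hopt2]; abel
  have hmono := inner_gradient_sub_ge_of_convexOn_add_norm_sq hconv (hdiff y1) (hdiff y2)
  rw [hx, inner_add_right, real_inner_smul_right, real_inner_self_eq_norm_sq, real_inner_comm]
  linarith [mul_le_mul_of_nonneg_left hmono hγ.le]
end

section
/- Under the hypotheses of the previous statement, and additionally assuming ∇F is L-Lipschitz, one has ‖y^{t+1} − (x^t − x^{t−1}) − y^t‖² ≤ [(−1 + 2γl) + (1 + γL)²]‖y^{t+1} − y^t‖². -/
/-!
Weak convexity of `F` (convexity of `F + (l/2)‖·‖²`) makes `∇F + l • id` monotone, so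
`⟪∇F y₂ - ∇F y₁, y₂ - y₁⟫ ≥ -l‖y₂ - y₁‖²`, while the Lipschitz bound gives `≤ L‖y₂ - y₁‖²`;
hence `l + L ≥ 0` unless `y₁ = y₂`. The optimality conditions turn the residual into
`γ (∇F y₁ - ∇F y₂)`, of squared norm at most `γ²L²‖y₂ - y₁‖²`, and the claimed constant is
`γ²L² + 2γ(l + L)`.
-/
open InnerProductSpace Set
open scoped RealInnerProductSpace

variable {E : Type*} [NormedAddCommGroup E] [InnerProductSpace ℝ E] [CompleteSpace E]

theorem hasGradientAt_sq_norm (x : E) : HasGradientAt (fun x => ‖x‖ ^ 2) (2 • x) x := by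
  rw [hasGradientAt_iff_hasFDerivAt]
  refine (hasStrictFDerivAt_norm_sq x).hasFDerivAt.congr_fderiv ?_
  ext v
  simp

theorem HasGradientAt.add_half_mul_sq_norm {F : E → ℝ} {g x : E} (hF : HasGradientAt F g x)
    (l : ℝ) : HasGradientAt (fun x => F x + (l / 2) * ‖x‖ ^ 2) (g + l • x) x := by
  rw [hasGradientAt_iff_hasFDerivAt] at hF ⊢
  have := hF.add (((hasGradientAt_iff_hasFDerivAt.mp (hasGradientAt_sq_norm x))).const_mul (l / 2))
  refine this.congr_fderiv ?_
  ext v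
  simp [two_smul]
  ring

theorem ConvexOn.inner_gradient_sub_nonneg_s5 {f : E → ℝ} {f' : E → E}
    (hf : ConvexOn ℝ univ f) (hf' : ∀ x, HasGradientAt f (f' x) x) (x y : E) :
    0 ≤ ⟪f' y - f' x, y - x⟫ := by
  set c := AffineMap.lineMap (k := ℝ) x y
  have hc : ∀ t, HasDerivAt c (y - x) t := fun t => AffineMap.hasDerivAt_lineMap
  have hφ : ∀ t, HasDerivAt (f ∘ c) ⟪f' (c t), y - x⟫ t := fun t =>
    (hasGradientAt_iff_hasFDerivAt.mp (hf' (c t))).comp_hasDerivAt t (hc t)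
  have hmono := (hf.comp_affineMap c).monotoneOn_deriv (fun t _ => (hφ t).differentiableAt)
    (mem_univ 0) (mem_univ 1) zero_le_one
  rw [(hφ 0).deriv, (hφ 1).deriv] at hmono
  simp only [c, AffineMap.lineMap_apply_zero, AffineMap.lineMap_apply_one] at hmono
  rw [inner_sub_left]
  linarith

theorem inner_gradient_sub_ge_of_convexOn_add_sq_norm {F : E → ℝ} {F' : E → E} {l : ℝ}
    (hF : ∀ x, HasGradientAt F (F' x) x)
    (hconv : ConvexOn ℝ univ (fun x => F x + (l / 2) * ‖x‖ ^ 2)) (x y : E) :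
    -(l * ‖y - x‖ ^ 2) ≤ ⟪F' y - F' x, y - x⟫ := by
  have h := hconv.inner_gradient_sub_nonneg_s5 (fun x => (hF x).add_half_mul_sq_norm l) x y
  have hsplit : F' y + l • y - (F' x + l • x) = (F' y - F' x) + l • (y - x) := by
    rw [smul_sub]; abel
  rw [hsplit, inner_add_left, real_inner_smul_left, real_inner_self_eq_norm_sq] at h
  linarith

theorem sub_sub_sub_eq_smul_sub_of_smul_eq {V : Type*} [AddCommGroup V] [Module ℝ V]
    {γ : ℝ} {g : V → V} {x0 x1 y1 y2 : V}
    (h2 : γ • g y2 = x1 - y2) (h1 : γ • g y1 = x0 - y1) :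
    y2 - (x1 - x0) - y1 = γ • (g y1 - g y2) := by
  rw [smul_sub, h1, h2]; abel

theorem stmt_5_general {n : ℕ} (F : EuclideanSpace ℝ (Fin n) → ℝ)
    (F' : EuclideanSpace ℝ (Fin n) → EuclideanSpace ℝ (Fin n)) (l L γ : ℝ)
    (hγ : 0 < γ)
    (hdiff : ∀ x, HasGradientAt F (F' x) x)
    (hconv : ConvexOn ℝ Set.univ (fun x => F x + (l / 2) * ‖x‖ ^ 2))
    (hlip : ∀ a b, ‖F' a - F' b‖ ≤ L * ‖a - b‖)
    (x0 x1 y1 y2 : EuclideanSpace ℝ (Fin n))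
    (hopt2 : γ • F' y2 = x1 - y2)
    (hopt1 : γ • F' y1 = x0 - y1) :
    ‖y2 - (x1 - x0) - y1‖ ^ 2 ≤ ((-1 + 2 * γ * l) + (1 + γ * L) ^ 2) * ‖y2 - y1‖ ^ 2 := by
  have hres : ‖y2 - (x1 - x0) - y1‖ ≤ γ * (L * ‖y2 - y1‖) := by
    rw [sub_sub_sub_eq_smul_sub_of_smul_eq hopt2 hopt1, norm_smul, Real.norm_of_nonneg hγ.le,
      norm_sub_rev y2]
    exact mul_le_mul_of_nonneg_left (hlip y1 y2) hγ.le
  have hcurv : 0 ≤ (l + L) * ‖y2 - y1‖ ^ 2 := by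
    have hlow := inner_gradient_sub_ge_of_convexOn_add_sq_norm hdiff hconv y1 y2
    have hup : ⟪F' y2 - F' y1, y2 - y1⟫ ≤ L * ‖y2 - y1‖ * ‖y2 - y1‖ :=
      (real_inner_le_norm _ _).trans (mul_le_mul_of_nonneg_right (hlip y2 y1) (norm_nonneg _))
    linear_combination hlow + hup
  calc ‖y2 - (x1 - x0) - y1‖ ^ 2 ≤ (γ * (L * ‖y2 - y1‖)) ^ 2 :=
        pow_le_pow_left₀ (norm_nonneg _) hres 2
    _ ≤ ((-1 + 2 * γ * l) + (1 + γ * L) ^ 2) * ‖y2 - y1‖ ^ 2 := by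
        linear_combination 2 * mul_nonneg hγ.le hcurv

theorem stmt_5 {n : ℕ} (F : EuclideanSpace ℝ (Fin n) → ℝ)
    (F' : EuclideanSpace ℝ (Fin n) → EuclideanSpace ℝ (Fin n)) (l L γ : ℝ)
    (hL : 0 < L) (hγ : 0 < γ)
    (hdiff : ∀ x, HasGradientAt F (F' x) x)
    (hconv : ConvexOn ℝ Set.univ (fun x => F x + (l / 2) * ‖x‖ ^ 2))
    (hlip : ∀ a b, ‖F' a - F' b‖ ≤ L * ‖a - b‖)
    (x0 x1 y1 y2 : EuclideanSpace ℝ (Fin n))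
    (hopt2 : γ • F' y2 = x1 - y2)
    (hopt1 : γ • F' y1 = x0 - y1) :
    ‖y2 - (x1 - x0) - y1‖ ^ 2 ≤ ((-1 + 2 * γ * l) + (1 + γ * L) ^ 2) * ‖y2 - y1‖ ^ 2 :=
  stmt_5_general F F' l L γ hγ hdiff hconv hlip x0 x1 y1 y2 hopt2 hopt1
end
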